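/- For a state ω on a unital C*-algebra A, left multiplication descends to the quotient: for each a ∈ A the map π_ω(a) : b + I_ω ↦ ab + I_ω is a well-defined linear operator on A / I_ω, bounded with operator norm at most ‖a‖, and a ↦ π_ω(a) is a *-homomorphism. -/

import Mathlib

open scoped ComplexOrder

/-! A functional that is nonnegative on every `star b * b` is nonnegative on all of the positive
cone, which in a star-ordered ring is generated by such elements; it is therefore monotone.
Conjugating `star a * a ≤ ‖star a * a‖ • 1 = ‖a‖² • 1` by `b` and applying `ω` gives the bound
`ω((ab)*(ab)) ≤ ‖a‖² ω(b*b)`, which in particular sends the Gel'fand ideal into itself. -/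

theorem map_nonneg_of_map_star_mul_self_nonneg {R M F : Type*} [NonUnitalSemiring R]
    [PartialOrder R] [StarRing R] [StarOrderedRing R] [AddCommMonoid M] [PartialOrder M]
    [IsOrderedAddMonoid M] [FunLike F R M] [AddMonoidHomClass F R M] (f : F)
    (hf : ∀ r, 0 ≤ f (star r * r)) {x : R} (hx : 0 ≤ x) : 0 ≤ f x := by
  rw [StarOrderedRing.nonneg_iff] at hx
  induction hx using AddSubmonoid.closure_induction with
  | mem _ hy =>
    obtain ⟨r, rfl⟩ := hy
    exact hf r
  | zero => rw [map_zero]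
  | add _ _ _ _ hy hz =>
    rw [map_add]
    exact add_nonneg hy hz

namespace PositiveLinearMap

def ofMapStarMulSelfNonneg {R E₁ E₂ : Type*} [Semiring R] [NonUnitalRing E₁] [PartialOrder E₁]
    [StarRing E₁] [StarOrderedRing E₁] [AddCommGroup E₂] [PartialOrder E₂]
    [IsOrderedAddMonoid E₂] [Module R E₁] [Module R E₂] (f : E₁ →ₗ[R] E₂)
    (hf : ∀ r, 0 ≤ f (star r * r)) : E₁ →ₚ[R] E₂ :=
  mk₀ f fun _ ↦ map_nonneg_of_map_star_mul_self_nonneg f hf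

variable {A : Type*} [NonUnitalCStarAlgebra A] [PartialOrder A] [StarOrderedRing A]
  (f : A →ₚ[ℂ] ℂ)

theorem map_star_mul_mul_le (a b : A) :
    f (star (a * b) * (a * b)) ≤ (‖a‖ : ℂ) ^ 2 * f (star b * b) :=
  calc f (star (a * b) * (a * b)) = f (star b * (star a * a) * b) := by
        rw [star_mul, mul_assoc, mul_assoc, mul_assoc]
    _ ≤ f (‖star a * a‖ • (star b * b)) :=
        OrderHomClass.mono f CStarAlgebra.star_left_conjugate_le_norm_smul
    _ = (‖a‖ : ℂ) ^ 2 * f (star b * b) := by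
        rw [CStarRing.norm_star_mul_self, ← Complex.coe_smul, map_smul, smul_eq_mul]
        push_cast
        ring

theorem map_star_mul_mul_eq_zero (a : A) {b : A} (hb : f (star b * b) = 0) :
    f (star (a * b) * (a * b)) = 0 :=
  le_antisymm (by simpa [hb] using f.map_star_mul_mul_le a b)
    (f.map_nonneg (star_mul_self_nonneg _))

end PositiveLinearMap

theorem gns_left_multiplication_descends_general
    {A : Type*} [NormedRing A] [StarRing A] [CStarRing A] [CompleteSpace A]
    [NormedAlgebra ℂ A] [StarModule ℂ A]
    (ω : A →L[ℂ] ℂ) (hpos : ∀ a : A, 0 ≤ ω (star a * a)) :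
    -- well-definedness: `I_ω` is mapped into itself by left multiplication, so
    -- `b + I_ω ↦ a b + I_ω` is independent of the representative
    (∀ a b b' : A, ω (star (b - b') * (b - b')) = 0 →
        ω (star (a * b - a * b') * (a * b - a * b')) = 0) ∧
    -- linearity in the argument (on representatives)
    (∀ a b b' : A, ∀ z : ℂ, a * (b + z • b') = a * b + z • (a * b')) ∧
    -- boundedness: ‖π_ω(a) (b + I_ω)‖² ≤ ‖a‖² ‖b + I_ω‖² in the GNS inner product
    (∀ a b : A, ω (star (a * b) * (a * b)) ≤ (‖a‖ : ℂ) ^ 2 * ω (star b * b)) ∧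
    -- multiplicativity: π_ω(a a') = π_ω(a) π_ω(a')
    (∀ a a' b : A, (a * a') * b = a * (a' * b)) ∧
    -- unitality: π_ω(1) = id
    (∀ b : A, (1 : A) * b = b) ∧
    -- star condition: ⟨π_ω(a) b, c⟩ = ⟨b, π_ω(star a) c⟩
    (∀ a b c : A, ω (star (a * b) * c) = ω (star b * (star a * c))) := by
  let : CStarAlgebra A := ⟨⟩
  let := CStarAlgebra.spectralOrder A
  let := CStarAlgebra.spectralOrderedRing A
  let f := PositiveLinearMap.ofMapStarMulSelfNonneg ω.toLinearMap hpos
  refine ⟨fun a b b' h ↦ ?_, fun a b b' z ↦ by rw [mul_add, mul_smul_comm],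
    f.map_star_mul_mul_le, fun a a' b ↦ mul_assoc a a' b, one_mul,
    fun a b c ↦ by rw [star_mul, mul_assoc]⟩
  rw [← mul_sub]
  exact f.map_star_mul_mul_eq_zero a h

/-- For a state `ω` on a unital C*-algebra `A`, left multiplication descends to the
quotient `A / I_ω` by the Gel'fand ideal `I_ω = {c : ω(c*c) = 0}`:  for each `a ∈ A` the
map `π_ω(a) : b + I_ω ↦ ab + I_ω` is well defined and linear, bounded with norm at most
`‖a‖` with respect to the GNS inner product `⟨b + I_ω, c + I_ω⟩ = ω(b*c)`, and
`a ↦ π_ω(a)` is a *-homomorphism. -/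
theorem gns_left_multiplication_descends
    {A : Type*} [NormedRing A] [StarRing A] [CStarRing A] [CompleteSpace A]
    [NormedAlgebra ℂ A] [StarModule ℂ A]
    (ω : A →L[ℂ] ℂ) (hpos : ∀ a : A, 0 ≤ ω (star a * a)) (hone : ω 1 = 1) :
    -- well-definedness: `I_ω` is mapped into itself by left multiplication, so
    -- `b + I_ω ↦ a b + I_ω` is independent of the representative
    (∀ a b b' : A, ω (star (b - b') * (b - b')) = 0 →
        ω (star (a * b - a * b') * (a * b - a * b')) = 0) ∧
    -- linearity in the argument (on representatives)
    (∀ a b b' : A, ∀ z : ℂ, a * (b + z • b') = a * b + z • (a * b')) ∧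
    -- boundedness: ‖π_ω(a) (b + I_ω)‖² ≤ ‖a‖² ‖b + I_ω‖² in the GNS inner product
    (∀ a b : A, ω (star (a * b) * (a * b)) ≤ (‖a‖ : ℂ) ^ 2 * ω (star b * b)) ∧
    -- multiplicativity: π_ω(a a') = π_ω(a) π_ω(a')
    (∀ a a' b : A, (a * a') * b = a * (a' * b)) ∧
    -- unitality: π_ω(1) = id
    (∀ b : A, (1 : A) * b = b) ∧
    -- star condition: ⟨π_ω(a) b, c⟩ = ⟨b, π_ω(star a) c⟩
    (∀ a b c : A, ω (star (a * b) * c) = ω (star b * (star a * c))) :=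
  gns_left_multiplication_descends_general ω hpos
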